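/- (Bilinear uniqueness constraint forces a deterministic choice.) Let A be a finite set with at least two elements, Q : A → ℝ, ε̄ > 0, and ν : A → ℝ with ν(a) ≥ 0 for all a and ∑_{a∈A} ν(a) = 1. Suppose V ∈ ℝ satisfies V ≥ Q(a) for all a ∈ A, V ≤ ∑_{a∈A} ν(a)·Q(a), and for all a ∈ A and a' ≠ a: ν(a)·(Q(a) − Q(a') − ε̄) ≥ 0. Then there is a unique a* ∈ A with ν(a*) = 1 (and ν(a) = 0 for a ≠ a*), V = Q(a*) = max_{a∈A} Q(a), and Q(a*) ≥ Q(a') + ε̄ for all a' ≠ a*. -/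
import Mathlib


/-- The bilinear uniqueness constraints force a deterministic choice: the randomized
policy `ν` puts all mass on a single action, which is the strict maximizer of `Q`. -/
theorem stmt_15 {A : Type*} [Fintype A] (hcard : 2 ≤ Fintype.card A)
    (Q : A → ℝ) (εb : ℝ) (hεb : 0 < εb)
    (ν : A → ℝ) (hν0 : ∀ a, 0 ≤ ν a) (hν1 : (∑ a : A, ν a) = 1)
    (V : ℝ) (hV1 : ∀ a : A, V ≥ Q a) (hV2 : V ≤ ∑ a : A, ν a * Q a)
    (hbil : ∀ a : A, ∀ a' : A, a' ≠ a → ν a * (Q a - Q a' - εb) ≥ 0) :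
    ∃ astar : A, ν astar = 1 ∧ (∀ a : A, a ≠ astar → ν a = 0) ∧
      V = Q astar ∧ (∀ a : A, Q a ≤ Q astar) ∧
      (∀ a' : A, a' ≠ astar → Q astar ≥ Q a' + εb) ∧
      (∀ b : A, ν b = 1 → b = astar) := by
  -- There is some astar with ν astar > 0
  have hex : ∃ a : A, 0 < ν a := by
    by_contra h
    push_neg at h
    have : (∑ a : A, ν a) = 0 := Finset.sum_eq_zero fun a _ => le_antisymm (h a) (hν0 a)
    rw [hν1] at this; norm_num at this
  obtain ⟨astar, hpos⟩ := hex
  -- strict gap: for a' ≠ astar, Q astar ≥ Q a' + εb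
  have hgap : ∀ a' : A, a' ≠ astar → Q astar ≥ Q a' + εb := by
    intro a' ha'
    have h := hbil astar a' ha'
    have : 0 ≤ Q astar - Q a' - εb := nonneg_of_mul_nonneg_right h hpos
    linarith
  -- ν a = 0 for a ≠ astar
  have hzero : ∀ a : A, a ≠ astar → ν a = 0 := by
    intro a ha
    by_contra hne
    have hpa : 0 < ν a := lt_of_le_of_ne (hν0 a) (Ne.symm hne)
    have h := hbil a astar (Ne.symm ha)
    have h2 : 0 ≤ Q a - Q astar - εb := nonneg_of_mul_nonneg_right h hpa
    have := hgap a ha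
    linarith
  have hν1' : ν astar = 1 := by
    have : (∑ a : A, ν a) = ν astar :=
      Finset.sum_eq_single astar (fun a _ ha => hzero a ha) (fun h => absurd (Finset.mem_univ astar) h)
    rw [this] at hν1; exact hν1
  have hmax : ∀ a : A, Q a ≤ Q astar := by
    intro a
    by_cases h : a = astar
    · subst h; exact le_refl _
    · have := hgap a h; linarith
  have hsum : (∑ a : A, ν a * Q a) = Q astar := by
    rw [Finset.sum_eq_single astar (fun a _ ha => by rw [hzero a ha, zero_mul])
      (fun h => absurd (Finset.mem_univ astar) h), hν1', one_mul]
  have hVQ : V = Q astar := le_antisymm (by rw [hsum] at hV2; exact hV2) (hV1 astar)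
  exact ⟨astar, hν1', hzero, hVQ, hmax, hgap, fun b hb => by
    by_contra hne
    rw [hzero b hne] at hb; norm_num at hb⟩
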